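/- arXiv:2209.01224 — 10 statements merged into one kernel-verified Lean document; each statement's English description precedes it below -/
import Mathlib

section
/- Let f_br, f_cr : [0,1] → ℝ be continuous and nonnegative, and let τ, ζ, ξ > 0. If (y, z) : [0, ∞) → ℝ² is a solution of the aNIMFA system dy/dt = −y + τ y(1−y)z, dz/dt = −ζ z f_br(y) + ξ (1−z) f_cr(y) with initial condition (y(0), z(0)) ∈ [0,1]², then (y(t), z(t)) ∈ [0,1]² for all t ≥ 0, i.e. the unit square [0,1]² is forward invariant. -/
open Set Real

/- Each of y, 1 - y, z, 1 - z satisfies a linear equation u' = -c u + g with g ≥ 0 and c bounded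
below on compact time intervals (c is continuous for the y-equation and nonnegative for the
z-equation once y is known to stay in [0, 1]). Such a u cannot become negative: on a compact
interval where c ≥ -K, the barrier ε exp((K + 1)(t - a)) can never be crossed by -u. -/

theorem nonneg_of_mul_le_deriv_of_neg {f f' : ℝ → ℝ} {a b K : ℝ}
    (hf : ContinuousOn f (Icc a b))
    (hf' : ∀ t ∈ Ico a b, HasDerivWithinAt f (f' t) (Ici t) t)
    (hK : ∀ t ∈ Ico a b, f t < 0 → K * f t ≤ f' t) (ha : 0 ≤ f a) :
    ∀ t ∈ Icc a b, 0 ≤ f t := by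
  intro t ht
  have barrier : ∀ ε > 0, -f t ≤ ε * exp ((K + 1) * (t - a)) := by
    intro ε hε
    refine image_le_of_deriv_right_lt_deriv_boundary (f := fun s => -f s) hf.neg
      (fun s hs => (hf' s hs).neg) (by simp only [id_eq, sub_self, mul_zero, exp_zero, mul_one]; linarith)
      (fun s => ((((hasDerivAt_id s).sub_const a).const_mul (K + 1)).exp).const_mul ε) ?_ ht
    intro s hs hfs
    simp only [id, mul_one] at hfs ⊢
    have hpos : 0 < ε * exp ((K + 1) * (s - a)) := by positivity
    have := hK s hs (by linarith)
    rw [show ε * (exp ((K + 1) * (s - a)) * (K + 1)) = (K + 1) * (ε * exp ((K + 1) * (s - a)))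
      by ring, ← hfs]
    linarith
  refine neg_nonpos.mp (le_of_forall_gt_imp_ge_of_dense fun δ hδ => ?_)
  have hE := exp_pos ((K + 1) * (t - a))
  calc -f t ≤ δ / exp ((K + 1) * (t - a)) * exp ((K + 1) * (t - a)) :=
        barrier _ (div_pos hδ hE)
    _ = δ := div_mul_cancel₀ δ hE.ne'

theorem nonneg_of_hasDerivAt_linear {f c g : ℝ → ℝ} {a : ℝ}
    (hf : ∀ t, a ≤ t → HasDerivAt f (-(c t) * f t + g t) t)
    (hc : ∀ T, BddBelow (c '' Icc a T)) (hg : ∀ t, a ≤ t → 0 ≤ g t) (ha : 0 ≤ f a) :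
    ∀ t, a ≤ t → 0 ≤ f t := by
  intro T hT
  obtain ⟨L, hL⟩ := hc T
  refine nonneg_of_mul_le_deriv_of_neg (K := -L)
    (fun t ht => (hf t ht.1).continuousAt.continuousWithinAt)
    (fun t ht => (hf t ht.1).hasDerivWithinAt) (fun t ht hft => ?_) ha T ⟨hT, le_rfl⟩
  have hLc : L ≤ c t := hL ⟨t, Ico_subset_Icc_self ht, rfl⟩
  nlinarith [hg t ht.1]

theorem ContinuousOn.bddBelow_image_Icc {c : ℝ → ℝ} {a : ℝ} (hc : ContinuousOn c (Ici a))
    (T : ℝ) : BddBelow (c '' Icc a T) :=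
  isCompact_Icc.bddBelow_image (hc.mono Icc_subset_Ici_self)

theorem bddBelow_image_of_nonneg {c : ℝ → ℝ} {a : ℝ} (hc : ∀ t, a ≤ t → 0 ≤ c t) (T : ℝ) :
    BddBelow (c '' Icc a T) :=
  ⟨0, by rintro _ ⟨t, ht, rfl⟩; exact hc t ht.1⟩

theorem mem_Icc_of_hasDerivAt_logistic {y r : ℝ → ℝ}
    (hy : ∀ t, 0 ≤ t → HasDerivAt y (-(y t) + r t * y t * (1 - y t)) t)
    (hr : ContinuousOn r (Ici 0)) (hy0 : y 0 ∈ Icc 0 1) :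
    ∀ t, 0 ≤ t → y t ∈ Icc 0 1 := by
  have hyc : ContinuousOn y (Ici 0) := fun t ht => (hy t ht).continuousAt.continuousWithinAt
  have hy_nonneg : ∀ t, 0 ≤ t → 0 ≤ y t :=
    nonneg_of_hasDerivAt_linear (c := fun t => 1 - r t * (1 - y t)) (g := fun _ => 0)
      (fun t ht => (hy t ht).congr_deriv (by ring))
      ((continuousOn_const.sub (hr.mul (continuousOn_const.sub hyc))).bddBelow_image_Icc)
      (fun _ _ => le_rfl) hy0.1
  have hy_le : ∀ t, 0 ≤ t → 0 ≤ 1 - y t :=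
    nonneg_of_hasDerivAt_linear (c := fun t => r t * y t) (g := y)
      (fun t ht => ((hy t ht).const_sub 1).congr_deriv (by ring))
      ((hr.mul hyc).bddBelow_image_Icc) hy_nonneg (sub_nonneg.mpr hy0.2)
  exact fun t ht => ⟨hy_nonneg t ht, sub_nonneg.mp (hy_le t ht)⟩

theorem mem_Icc_of_hasDerivAt_gain_loss {z p q : ℝ → ℝ}
    (hz : ∀ t, 0 ≤ t → HasDerivAt z (-(p t * z t) + q t * (1 - z t)) t)
    (hp : ∀ t, 0 ≤ t → 0 ≤ p t) (hq : ∀ t, 0 ≤ t → 0 ≤ q t) (hz0 : z 0 ∈ Icc 0 1) :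
    ∀ t, 0 ≤ t → z t ∈ Icc 0 1 := by
  have hz_nonneg : ∀ t, 0 ≤ t → 0 ≤ z t :=
    nonneg_of_hasDerivAt_linear (c := fun t => p t + q t) (g := q)
      (fun t ht => (hz t ht).congr_deriv (by ring))
      (bddBelow_image_of_nonneg fun t ht => add_nonneg (hp t ht) (hq t ht)) hq hz0.1
  have hz_le : ∀ t, 0 ≤ t → 0 ≤ 1 - z t :=
    nonneg_of_hasDerivAt_linear (c := q) (g := fun t => p t * z t)
      (fun t ht => ((hz t ht).const_sub 1).congr_deriv (by ring))
      (bddBelow_image_of_nonneg hq) (fun t ht => mul_nonneg (hp t ht) (hz_nonneg t ht))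
      (sub_nonneg.mpr hz0.2)
  exact fun t ht => ⟨hz_nonneg t ht, sub_nonneg.mp (hz_le t ht)⟩

theorem stmt_0_general (fbr fcr : ℝ → ℝ)
    (hbr : ∀ y ∈ Set.Icc (0:ℝ) 1, 0 ≤ fbr y) (hcr : ∀ y ∈ Set.Icc (0:ℝ) 1, 0 ≤ fcr y)
    (τ ζ ξ : ℝ) (hζ : 0 < ζ) (hξ : 0 < ξ)
    (y z : ℝ → ℝ)
    (hy : ∀ t : ℝ, 0 ≤ t → HasDerivAt y (-(y t) + τ * y t * (1 - y t) * z t) t)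
    (hz : ∀ t : ℝ, 0 ≤ t →
      HasDerivAt z (-(ζ * z t * fbr (y t)) + ξ * (1 - z t) * fcr (y t)) t)
    (hy0 : y 0 ∈ Set.Icc (0:ℝ) 1) (hz0 : z 0 ∈ Set.Icc (0:ℝ) 1) :
    ∀ t : ℝ, 0 ≤ t → y t ∈ Set.Icc (0:ℝ) 1 ∧ z t ∈ Set.Icc (0:ℝ) 1 := by
  have hzc : ContinuousOn z (Ici 0) := fun t ht => (hz t ht).continuousAt.continuousWithinAt
  have hy_mem : ∀ t, 0 ≤ t → y t ∈ Icc 0 1 :=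
    mem_Icc_of_hasDerivAt_logistic (r := fun t => τ * z t)
      (fun t ht => (hy t ht).congr_deriv (by ring)) (continuousOn_const.mul hzc) hy0
  have hz_mem : ∀ t, 0 ≤ t → z t ∈ Icc 0 1 :=
    mem_Icc_of_hasDerivAt_gain_loss (p := fun t => ζ * fbr (y t)) (q := fun t => ξ * fcr (y t))
      (fun t ht => (hz t ht).congr_deriv (by ring))
      (fun t ht => mul_nonneg hζ.le (hbr _ (hy_mem t ht)))
      (fun t ht => mul_nonneg hξ.le (hcr _ (hy_mem t ht))) hz0
  exact fun t ht => ⟨hy_mem t ht, hz_mem t ht⟩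

/-- Forward invariance of the unit square for the aNIMFA system
    dy/dt = −y + τ y(1−y)z, dz/dt = −ζ z f_br(y) + ξ (1−z) f_cr(y). -/
theorem stmt_0 (fbr fcr : ℝ → ℝ)
    (hbrC : ContinuousOn fbr (Set.Icc 0 1)) (hcrC : ContinuousOn fcr (Set.Icc 0 1))
    (hbr : ∀ y ∈ Set.Icc (0:ℝ) 1, 0 ≤ fbr y) (hcr : ∀ y ∈ Set.Icc (0:ℝ) 1, 0 ≤ fcr y)
    (τ ζ ξ : ℝ) (hτ : 0 < τ) (hζ : 0 < ζ) (hξ : 0 < ξ)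
    (y z : ℝ → ℝ)
    (hy : ∀ t : ℝ, 0 ≤ t → HasDerivAt y (-(y t) + τ * y t * (1 - y t) * z t) t)
    (hz : ∀ t : ℝ, 0 ≤ t →
      HasDerivAt z (-(ζ * z t * fbr (y t)) + ξ * (1 - z t) * fcr (y t)) t)
    (hy0 : y 0 ∈ Set.Icc (0:ℝ) 1) (hz0 : z 0 ∈ Set.Icc (0:ℝ) 1) :
    ∀ t : ℝ, 0 ≤ t → y t ∈ Set.Icc (0:ℝ) 1 ∧ z t ∈ Set.Icc (0:ℝ) 1 :=
  stmt_0_general fbr fcr hbr hcr τ ζ ξ hζ hξ y z hy hz hy0 hz0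
end

section
/- Let f_br, f_cr : [0,1] → ℝ be continuously differentiable and nonnegative, and let τ, ζ, ξ > 0. If (y, z) : ℝ → ℝ² is a solution of the aNIMFA system dy/dt = −y + τ y(1−y)z, dz/dt = −ζ z f_br(y) + ξ (1−z) f_cr(y) such that (y(t), z(t)) ∈ (0,1)² for all t, and (y, z) is periodic with some period T > 0, then (y, z) is constant. That is, the aNIMFA system admits no non-constant periodic solutions lying entirely in the open unit square (0,1)². -/
open Set MeasureTheory intervalIntegral
open scoped Interval

/-!
Let `q = τ z - 1/(1 - y)` (`nullclineGap`) measure the distance from the `y`-nullcline, so that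
`y' = y (1 - y) q`. Along a solution in the open square,
`d/dt (q²/2) = -(ζ f_br(y) + ξ f_cr(y) + y/(1 - y)) q² - v(y) y'` for a function `v`
continuous on `(0, 1)`. Over one period both `q²/2` and the exact term `v(y) y'` integrate to
zero, so the nonnegative dissipation term has zero integral and vanishes identically. Hence
`q ≡ 0`, so `y' ≡ 0`, `y` is constant, and then so is `z = 1/(τ (1 - y))`.
-/

theorem eqOn_zero_of_intervalIntegral_eq_zero {G : ℝ → ℝ} {a b : ℝ} (hab : a ≤ b)
    (hG : Continuous G) (hG0 : ∀ t, 0 ≤ G t) (h : ∫ t in a..b, G t = 0) :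
    EqOn G 0 (Ioc a b) :=
  Measure.eqOn_Ioc_of_ae_eq volume
    ((integral_eq_zero_iff_of_le_of_nonneg_ae hab (.of_forall hG0)
      (hG.intervalIntegrable _ _)).1 h)
    hG.continuousOn continuousOn_const

theorem intervalIntegral_eq_zero_of_hasDerivAt_eq_neg_sub {F G f f' g : ℝ → ℝ} {a b : ℝ}
    (hF : ∀ t, HasDerivAt F (-G t - g (f t) * f' t) t) (hf : ∀ t, HasDerivAt f (f' t) t)
    (hG : Continuous G) (hf' : Continuous f') (hg : ContinuousOn g (f '' [[a, b]]))
    (hFab : F a = F b) (hfab : f a = f b) :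
    ∫ t in a..b, G t = 0 := by
  have hgf : ContinuousOn (fun t => g (f t) * f' t) [[a, b]] :=
    (hg.comp (fun t _ => (hf t).continuousAt.continuousWithinAt) (mapsTo_image f _)).mul
      hf'.continuousOn
  have hexact : ∫ t in a..b, g (f t) * f' t = 0 := by
    simpa [hfab] using integral_comp_mul_deriv' (fun t _ => hf t) hf'.continuousOn hg
  have hGi : IntervalIntegrable (fun t => -G t) volume a b := (hG.intervalIntegrable a b).neg
  have hFTC := integral_eq_sub_of_hasDerivAt (fun t _ => hF t) (hGi.sub hgf.intervalIntegrable)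
  rw [integral_sub hGi hgf.intervalIntegrable, intervalIntegral.integral_neg,
    hexact, hFab, sub_self] at hFTC
  linarith

noncomputable section ANIMFA

variable (fbr fcr : ℝ → ℝ) (τ ζ ξ : ℝ)

def nullclineGap (y z : ℝ) : ℝ := τ * z - (1 - y)⁻¹

def dissipation (y z : ℝ) : ℝ :=
  (ζ * fbr y + ξ * fcr y + y / (1 - y)) * nullclineGap τ y z ^ 2

/-- Multiplied by `y'`, this is the part of `d/dt (q²/2)` that is an exact derivative. -/
def potentialDensity (w : ℝ) : ℝ :=
  ((ζ * fbr w + ξ * fcr w) / (1 - w) - τ * ξ * fcr w) / (w * (1 - w))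

variable {fbr fcr τ ζ ξ}

theorem neg_add_mul_eq_mul_nullclineGap {y : ℝ} (z : ℝ) (hy : y ≠ 1) :
    -y + τ * y * (1 - y) * z = y * (1 - y) * nullclineGap τ y z := by
  have : 1 - y ≠ 0 := sub_ne_zero.2 hy.symm
  unfold nullclineGap
  field_simp
  ring

theorem nullclineGap_mul_deriv_eq {w : ℝ} (u : ℝ) (h0 : w ≠ 0) (h1 : w ≠ 1) :
    nullclineGap τ w u *
        (τ * (-(ζ * u * fbr w) + ξ * (1 - u) * fcr w) - (-w + τ * w * (1 - w) * u) / (1 - w) ^ 2) =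
      -dissipation fbr fcr τ ζ ξ w u -
        potentialDensity fbr fcr τ ζ ξ w * (-w + τ * w * (1 - w) * u) := by
  have : 1 - w ≠ 0 := sub_ne_zero.2 h1.symm
  unfold dissipation potentialDensity nullclineGap
  field_simp
  ring

theorem hasDerivAt_nullclineGap_sq {y z : ℝ → ℝ} {t : ℝ}
    (hy : HasDerivAt y (-(y t) + τ * y t * (1 - y t) * z t) t)
    (hz : HasDerivAt z (-(ζ * z t * fbr (y t)) + ξ * (1 - z t) * fcr (y t)) t)
    (h0 : y t ≠ 0) (h1 : y t ≠ 1) :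
    HasDerivAt (fun s => nullclineGap τ (y s) (z s) ^ 2 / 2)
      (-dissipation fbr fcr τ ζ ξ (y t) (z t) -
        potentialDensity fbr fcr τ ζ ξ (y t) * (-(y t) + τ * y t * (1 - y t) * z t)) t := by
  have hgap : HasDerivAt (fun s => nullclineGap τ (y s) (z s)) _ t :=
    (hz.const_mul τ).sub ((hy.const_sub 1).inv (sub_ne_zero.2 (Ne.symm h1)))
  refine ((hgap.pow 2).div_const 2).congr_deriv ?_
  rw [← nullclineGap_mul_deriv_eq _ h0 h1]
  push_cast
  ring

theorem dissipation_nonneg {y : ℝ} (z : ℝ) (hζ : 0 ≤ ζ) (hξ : 0 ≤ ξ)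
    (hbr : 0 ≤ fbr y) (hcr : 0 ≤ fcr y) (hy : y ∈ Ioo 0 1) :
    0 ≤ dissipation fbr fcr τ ζ ξ y z := by
  have := div_pos hy.1 (sub_pos.2 hy.2)
  unfold dissipation
  positivity

theorem nullclineGap_eq_zero_of_dissipation_eq_zero {y z : ℝ} (hζ : 0 ≤ ζ) (hξ : 0 ≤ ξ)
    (hbr : 0 ≤ fbr y) (hcr : 0 ≤ fcr y) (hy : y ∈ Ioo 0 1)
    (h : dissipation fbr fcr τ ζ ξ y z = 0) : nullclineGap τ y z = 0 := by
  have hpos : 0 < ζ * fbr y + ξ * fcr y + y / (1 - y) := by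
    have := div_pos hy.1 (sub_pos.2 hy.2)
    positivity
  simpa [dissipation, hpos.ne'] using h

theorem continuousOn_potentialDensity (hbr : ContinuousOn fbr (Ioo 0 1))
    (hcr : ContinuousOn fcr (Ioo 0 1)) :
    ContinuousOn (potentialDensity fbr fcr τ ζ ξ) (Ioo 0 1) := by
  have h1 : ∀ w ∈ Ioo (0 : ℝ) 1, 1 - w ≠ 0 := fun w hw => (sub_pos.2 hw.2).ne'
  unfold potentialDensity
  refine ContinuousOn.div (by fun_prop (disch := assumption)) (by fun_prop) ?_
  exact fun w hw => mul_ne_zero hw.1.ne' (h1 w hw)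

theorem continuous_dissipation_comp {y z : ℝ → ℝ} (hbr : ContinuousOn fbr (Ioo 0 1))
    (hcr : ContinuousOn fcr (Ioo 0 1)) (hy : Continuous y) (hz : Continuous z)
    (hy01 : ∀ t, y t ∈ Ioo 0 1) :
    Continuous fun t => dissipation fbr fcr τ ζ ξ (y t) (z t) := by
  have hy1 : ∀ t, 1 - y t ≠ 0 := fun t => (sub_pos.2 (hy01 t).2).ne'
  have hbry : Continuous fun t => fbr (y t) := hbr.comp_continuous hy hy01
  have hcry : Continuous fun t => fcr (y t) := hcr.comp_continuous hy hy01
  unfold dissipation nullclineGap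
  exact ((continuous_const.mul hbry).add (continuous_const.mul hcry) |>.add
    (hy.div (continuous_const.sub hy) hy1)).mul
    ((continuous_const.mul hz).sub ((continuous_const.sub hy).inv₀ hy1) |>.pow 2)

end ANIMFA

/-- The aNIMFA system admits no non-constant periodic solutions lying
    entirely in the open unit square (0,1)². -/
theorem stmt_3 (fbr fcr : ℝ → ℝ)
    (hbrC : ContDiffOn ℝ 1 fbr (Set.Icc 0 1)) (hcrC : ContDiffOn ℝ 1 fcr (Set.Icc 0 1))
    (hbr : ∀ y ∈ Set.Icc (0:ℝ) 1, 0 ≤ fbr y) (hcr : ∀ y ∈ Set.Icc (0:ℝ) 1, 0 ≤ fcr y)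
    (τ ζ ξ : ℝ) (hτ : 0 < τ) (hζ : 0 < ζ) (hξ : 0 < ξ)
    (y z : ℝ → ℝ)
    (hy : ∀ t : ℝ, HasDerivAt y (-(y t) + τ * y t * (1 - y t) * z t) t)
    (hz : ∀ t : ℝ, HasDerivAt z (-(ζ * z t * fbr (y t)) + ξ * (1 - z t) * fcr (y t)) t)
    (hin : ∀ t : ℝ, y t ∈ Set.Ioo (0:ℝ) 1 ∧ z t ∈ Set.Ioo (0:ℝ) 1)
    (T : ℝ) (hT : 0 < T)
    (hper : ∀ t : ℝ, y (t + T) = y t ∧ z (t + T) = z t) :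
    ∀ t s : ℝ, y t = y s ∧ z t = z s := by
  have hy01 : ∀ t, y t ∈ Ioo 0 1 := fun t => (hin t).1
  have hbr01 : ∀ t, 0 ≤ fbr (y t) := fun t => hbr _ (Ioo_subset_Icc_self (hy01 t))
  have hcr01 : ∀ t, 0 ≤ fcr (y t) := fun t => hcr _ (Ioo_subset_Icc_self (hy01 t))
  have hbrIoo := hbrC.continuousOn.mono Ioo_subset_Icc_self
  have hcrIoo := hcrC.continuousOn.mono Ioo_subset_Icc_self
  have hycont : Continuous y := continuous_iff_continuousAt.2 fun t => (hy t).continuousAt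
  have hzcont : Continuous z := continuous_iff_continuousAt.2 fun t => (hz t).continuousAt
  have hG := continuous_dissipation_comp (τ := τ) (ζ := ζ) (ξ := ξ) hbrIoo hcrIoo hycont hzcont hy01
  have hGint : ∀ a, ∫ t in a..a + T, dissipation fbr fcr τ ζ ξ (y t) (z t) = 0 := fun a =>
    intervalIntegral_eq_zero_of_hasDerivAt_eq_neg_sub
      (fun t => hasDerivAt_nullclineGap_sq (hy t) (hz t) (hy01 t).1.ne' (hy01 t).2.ne) hy hG
      (by fun_prop) ((continuousOn_potentialDensity hbrIoo hcrIoo).mono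
        (by rintro _ ⟨t, -, rfl⟩; exact hy01 t))
      (by simp only [hper]) (hper a).1.symm
  have hgap : ∀ t, nullclineGap τ (y t) (z t) = 0 := fun t =>
    nullclineGap_eq_zero_of_dissipation_eq_zero hζ.le hξ.le (hbr01 t) (hcr01 t) (hy01 t) <|
      eqOn_zero_of_intervalIntegral_eq_zero (by linarith) hG
        (fun s => dissipation_nonneg _ hζ.le hξ.le (hbr01 s) (hcr01 s) (hy01 s))
        (hGint (t - T)) ⟨by linarith, by simp⟩
  have hyconst : ∀ t s, y t = y s := is_const_of_deriv_eq_zero (fun t => (hy t).differentiableAt)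
    fun t => by rw [(hy t).deriv, neg_add_mul_eq_mul_nullclineGap _ (hy01 t).2.ne, hgap, mul_zero]
  intro t s
  refine ⟨hyconst t s, mul_left_cancel₀ hτ.ne' ?_⟩
  have hgt := hgap t
  have hgs := hgap s
  unfold nullclineGap at hgt hgs
  rw [hyconst t s] at hgt
  linarith
end

section
/- Let f_br, f_cr : (0,1) → ℝ be continuously differentiable with f_cr nonnegative, let τ, ζ, ξ > 0, and let f(y,z) = −y + τ y(1−y)z, g(y,z) = −ζ z f_br(y) + ξ (1−z) f_cr(y) and φ(y,z) = 1/(yz). Then for every (y,z) ∈ (0,1)² the Dulac expression F(y,z) = ∂(φ f)/∂y (y,z) + ∂(φ g)/∂z (y,z) equals −τ − ξ f_cr(y)/(y z²), and in particular F(y,z) < 0 throughout (0,1)². -/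
/-!
Multiplying by the Dulac function simplifies both components: on `y ≠ 0` one has
`φ f = -1/z + τ (1 - y)`, affine in `y`, and on `z ≠ 0` one has
`φ g = -(ζ f_br(y) + ξ f_cr(y)) / y + (ξ f_cr(y) / y) / z`, so both partial derivatives are
explicit. The sign then comes from `τ > 0` and `f_cr ≥ 0`.
-/

open Topology

theorem hasDerivAt_dulac_fst {τ y z : ℝ} (hy : y ≠ 0) (hz : z ≠ 0) :
    HasDerivAt (fun y' => 1 / (y' * z) * (-y' + τ * y' * (1 - y') * z)) (-τ) y := by
  have hsimp : (fun y' => 1 / (y' * z) * (-y' + τ * y' * (1 - y') * z))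
      =ᶠ[𝓝 y] fun y' => -1 / z + τ * (1 - y') := by
    filter_upwards [eventually_ne_nhds hy] with y' hy'
    field_simp
  refine HasDerivAt.congr_of_eventuallyEq ?_ hsimp
  simpa using (((hasDerivAt_id y).const_sub 1).const_mul τ).const_add (-1 / z)

theorem hasDerivAt_dulac_snd {ζ ξ p q y z : ℝ} (hy : y ≠ 0) (hz : z ≠ 0) :
    HasDerivAt (fun z' => 1 / (y * z') * (-(ζ * z' * p) + ξ * (1 - z') * q))
      (-(ξ * q / (y * z ^ 2))) z := by
  have hsimp : (fun z' => 1 / (y * z') * (-(ζ * z' * p) + ξ * (1 - z') * q))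
      =ᶠ[𝓝 z] fun z' => (-(ζ * p) - ξ * q) / y + ξ * q / y * z'⁻¹ := by
    filter_upwards [eventually_ne_nhds hz] with z' hz'
    field_simp
    ring
  refine HasDerivAt.congr_of_eventuallyEq ?_ hsimp
  convert ((hasDerivAt_inv hz).const_mul (ξ * q / y)).const_add ((-(ζ * p) - ξ * q) / y) using 1
  ring

theorem stmt_4_general (fbr fcr : ℝ → ℝ)
    (hcr : ∀ y ∈ Set.Ioo (0:ℝ) 1, 0 ≤ fcr y)
    (τ ζ ξ : ℝ) (hτ : 0 < τ) (hξ : 0 < ξ) :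
    ∀ y ∈ Set.Ioo (0:ℝ) 1, ∀ z ∈ Set.Ioo (0:ℝ) 1,
      (deriv (fun y' => (1 / (y' * z)) * (-y' + τ * y' * (1 - y') * z)) y
        + deriv (fun z' => (1 / (y * z')) * (-(ζ * z' * fbr y) + ξ * (1 - z') * fcr y)) z
        = -τ - ξ * fcr y / (y * z ^ 2))
      ∧ (deriv (fun y' => (1 / (y' * z)) * (-y' + τ * y' * (1 - y') * z)) y
        + deriv (fun z' => (1 / (y * z')) * (-(ζ * z' * fbr y) + ξ * (1 - z') * fcr y)) z
        < 0) := by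
  intro y hy z hz
  have hy0 : y ≠ 0 := hy.1.ne'
  have hz0 : z ≠ 0 := hz.1.ne'
  have hF : deriv (fun y' => (1 / (y' * z)) * (-y' + τ * y' * (1 - y') * z)) y
      + deriv (fun z' => (1 / (y * z')) * (-(ζ * z' * fbr y) + ξ * (1 - z') * fcr y)) z
      = -τ - ξ * fcr y / (y * z ^ 2) := by
    rw [(hasDerivAt_dulac_fst hy0 hz0).deriv, (hasDerivAt_dulac_snd hy0 hz0).deriv]
    ring
  have hcr_term : 0 ≤ ξ * fcr y / (y * z ^ 2) :=
    div_nonneg (mul_nonneg hξ.le (hcr y hy)) (mul_nonneg hy.1.le (sq_nonneg z))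
  exact ⟨hF, by linarith⟩

/-- The Dulac expression F(y,z) = ∂(φf)/∂y + ∂(φg)/∂z with φ(y,z) = 1/(yz)
    equals −τ − ξ f_cr(y)/(y z²) on (0,1)², and in particular is negative there. -/
theorem stmt_4 (fbr fcr : ℝ → ℝ)
    (hbrC : ContDiffOn ℝ 1 fbr (Set.Ioo 0 1)) (hcrC : ContDiffOn ℝ 1 fcr (Set.Ioo 0 1))
    (hcr : ∀ y ∈ Set.Ioo (0:ℝ) 1, 0 ≤ fcr y)
    (τ ζ ξ : ℝ) (hτ : 0 < τ) (hζ : 0 < ζ) (hξ : 0 < ξ) :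
    ∀ y ∈ Set.Ioo (0:ℝ) 1, ∀ z ∈ Set.Ioo (0:ℝ) 1,
      (deriv (fun y' => (1 / (y' * z)) * (-y' + τ * y' * (1 - y') * z)) y
        + deriv (fun z' => (1 / (y * z')) * (-(ζ * z' * fbr y) + ξ * (1 - z') * fcr y)) z
        = -τ - ξ * fcr y / (y * z ^ 2))
      ∧ (deriv (fun y' => (1 / (y' * z)) * (-y' + τ * y' * (1 - y') * z)) y
        + deriv (fun z' => (1 / (y * z')) * (-(ζ * z' * fbr y) + ξ * (1 - z') * fcr y)) z
        < 0) :=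
  stmt_4_general fbr fcr hcr τ ζ ξ hτ hξ
end

section
/- Let τ, ζ, ξ > 0 and ω = ζ/ξ. For the RLAD system dy/dt = −y + τ y(1−y)z, dz/dt = −ζ z + ξ(1−z), the point (y∞, z∞) = (1 − (1+ω)/τ, 1/(1+ω)) is an equilibrium, and it lies in the biologically feasible region (0,1) × (0,1) if and only if τ > 1 + ω. Moreover, the Jacobian matrix of the system at this equilibrium is upper triangular with eigenvalues λ₁ = 1 − τ/(1+ω) and λ₂ = −(ζ + ξ); in particular, if τ > 1 + ω then both eigenvalues are negative. -/
/-!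
The activation equation dz/dt = ξ - (ζ + ξ) z does not involve y, so its zero z∞ = 1/(1+ω) is
found first and the Jacobian is upper triangular, with the diagonal entries as eigenvalues.
The choice of y∞ makes τ (1 - y∞) z∞ = 1, which turns the infection equation
y (τ (1 - y) z - 1) into 0 and its y-derivative -1 + τ (1 - 2y) z into 1 - τ z∞.
-/

open Polynomial Set

theorem Matrix.IsUpperTriangular.hasEigenvalue_toLin' {R n : Type*} [CommRing R] [IsDomain R]
    [Fintype n] [DecidableEq n] [LinearOrder n] {M : Matrix n n R} (hM : M.IsUpperTriangular)
    (i : n) : Module.End.HasEigenvalue (Matrix.toLin' M) (M i i) := by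
  rw [Module.End.hasEigenvalue_iff_isRoot_charpoly, Matrix.charpoly_toLin',
    Matrix.charpoly_of_isUpperTriangular M hM, IsRoot, eval_prod]
  exact Finset.prod_eq_zero (Finset.mem_univ i) (by simp)

theorem Matrix.isUpperTriangular_fin_two {R : Type*} [CommRing R] (a b d : R) :
    (!![a, b; 0, d] : Matrix (Fin 2) (Fin 2) R).IsUpperTriangular := by
  intro i j hij
  fin_cases i <;> fin_cases j <;> simp_all

section

variable {𝕜 : Type*} [NontriviallyNormedField 𝕜]

theorem hasDerivAt_rlad_infection (τ z y : 𝕜) :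
    HasDerivAt (fun y => -y + τ * y * (1 - y) * z) (-1 + τ * (1 - 2 * y) * z) y :=
  ((hasDerivAt_id y).neg.add ((((hasDerivAt_id y).const_mul τ).mul
    ((hasDerivAt_const y 1).sub (hasDerivAt_id y))).mul_const z)).congr_deriv
    (by simp only [id, Pi.sub_apply]; ring)

theorem hasDerivAt_rlad_activation (ζ ξ z : 𝕜) :
    HasDerivAt (fun z => -(ζ * z) + ξ * (1 - z)) (-(ζ + ξ)) z :=
  (((hasDerivAt_id z).const_mul ζ).neg.add
    (((hasDerivAt_const z 1).sub (hasDerivAt_id z)).const_mul ξ)).congr_deriv (by ring)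

theorem deriv_const_add_mul (c d x : 𝕜) : deriv (fun z => c + d * z) x = d :=
  (((hasDerivAt_id x).const_mul d).const_add c).deriv.trans (mul_one d)

end

theorem rlad_activation_equilibrium {K : Type*} [Field K] {ζ ξ ω : K} (hζ : ζ = ω * ξ)
    (hω : 1 + ω ≠ 0) :
    -(ζ * (1 / (1 + ω))) + ξ * (1 - 1 / (1 + ω)) = 0 := by
  subst hζ
  field_simp
  ring

theorem one_sub_div_mem_Ioo_iff {a τ : ℝ} (ha : 0 < a) (hτ : 0 < τ) :
    1 - a / τ ∈ Ioo 0 1 ↔ a < τ := by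
  rw [mem_Ioo, sub_pos, sub_lt_self_iff, div_lt_one hτ, and_iff_left (div_pos ha hτ)]

theorem one_div_one_add_mem_Ioo {ω : ℝ} (hω : 0 < ω) : 1 / (1 + ω) ∈ Ioo 0 1 :=
  ⟨by positivity, (div_lt_one (by positivity)).2 (by linarith)⟩

/-- RLAD model: (1 − (1+ω)/τ, 1/(1+ω)) is an equilibrium; it lies in
    (0,1) × (0,1) iff τ > 1 + ω; the Jacobian there is upper triangular with
    eigenvalues 1 − τ/(1+ω) and −(ζ+ξ), both negative when τ > 1 + ω. -/
theorem stmt_7 (τ ζ ξ : ℝ) (hτ : 0 < τ) (hζ : 0 < ζ) (hξ : 0 < ξ)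
    (ω : ℝ) (hω : ω = ζ / ξ) :
    let yinf : ℝ := 1 - (1 + ω) / τ
    let zinf : ℝ := 1 / (1 + ω)
    let J : Matrix (Fin 2) (Fin 2) ℝ :=
      !![deriv (fun y => -y + τ * y * (1 - y) * zinf) yinf,
         deriv (fun z => -yinf + τ * yinf * (1 - yinf) * z) zinf;
         deriv (fun _y : ℝ => -(ζ * zinf) + ξ * (1 - zinf)) yinf,
         deriv (fun z => -(ζ * z) + ξ * (1 - z)) zinf]
    (-yinf + τ * yinf * (1 - yinf) * zinf = 0) ∧
    (-(ζ * zinf) + ξ * (1 - zinf) = 0) ∧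
    ((yinf ∈ Set.Ioo (0:ℝ) 1 ∧ zinf ∈ Set.Ioo (0:ℝ) 1) ↔ 1 + ω < τ) ∧
    J 1 0 = 0 ∧ J 0 0 = 1 - τ / (1 + ω) ∧ J 1 1 = -(ζ + ξ) ∧
    Module.End.HasEigenvalue (Matrix.toLin' J) (1 - τ / (1 + ω)) ∧
    Module.End.HasEigenvalue (Matrix.toLin' J) (-(ζ + ξ)) ∧
    (1 + ω < τ → 1 - τ / (1 + ω) < 0 ∧ -(ζ + ξ) < 0) := by
  intro yinf zinf J
  have hω0 : 0 < ω := hω ▸ div_pos hζ hξ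
  have hω1 : 0 < 1 + ω := by linarith
  have hkey : τ * (1 - yinf) * zinf = 1 := by
    simp only [yinf, zinf, sub_sub_cancel]
    field_simp
  have hJ00 : deriv (fun y => -y + τ * y * (1 - y) * zinf) yinf = 1 - τ * zinf := by
    rw [(hasDerivAt_rlad_infection τ zinf yinf).deriv]
    linear_combination 2 * hkey
  have hJ : J = !![1 - τ / (1 + ω), τ * yinf * (1 - yinf); 0, -(ζ + ξ)] := by
    show !![_, _; _, _] = _
    rw [hJ00, deriv_const_add_mul, deriv_const, (hasDerivAt_rlad_activation ζ ξ zinf).deriv,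
      mul_one_div]
  refine ⟨by linear_combination yinf * hkey,
    rlad_activation_equilibrium (by rw [hω, div_mul_cancel₀ ζ hξ.ne']) hω1.ne',
    ?_, by rw [hJ]; rfl, by rw [hJ]; rfl, by rw [hJ]; rfl, ?_, ?_, fun h => ?_⟩
  · rw [one_sub_div_mem_Ioo_iff hω1 hτ, and_iff_left (one_div_one_add_mem_Ioo hω0)]
  · rw [hJ]
    exact (Matrix.isUpperTriangular_fin_two _ _ _).hasEigenvalue_toLin' 0
  · rw [hJ]
    exact (Matrix.isUpperTriangular_fin_two _ _ _).hasEigenvalue_toLin' 1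
  · exact ⟨sub_neg.2 ((one_lt_div hω1).2 h), by linarith⟩
end

section
/- Let τ > 1, ζ, ξ > 0 and ω = ζ/ξ. For the system dy/dt = −y + τ y(1−y)z, dz/dt = −ζ z y + ξ(1−z) (i.e. f_br(y) = y, f_cr(y) = 1), the point (y∞, z∞) = ((τ−1)/(τ+ω), (τ+ω)/(τ(1+ω))) is an equilibrium, it lies in (0,1) × (0,1], and it is the unique equilibrium with y∞ > 0. -/
/-- Example 2 (f_br(y) = y, f_cr(y) = 1): for τ > 1 the point
    ((τ−1)/(τ+ω), (τ+ω)/(τ(1+ω))) is an equilibrium, lies in (0,1) × (0,1],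
    and is the unique equilibrium with positive prevalence. -/
theorem stmt_8 (τ ζ ξ : ℝ) (hτ : 1 < τ) (hζ : 0 < ζ) (hξ : 0 < ξ)
    (ω : ℝ) (hω : ω = ζ / ξ) :
    let yinf : ℝ := (τ - 1) / (τ + ω)
    let zinf : ℝ := (τ + ω) / (τ * (1 + ω))
    (-yinf + τ * yinf * (1 - yinf) * zinf = 0) ∧
    (-(ζ * zinf * yinf) + ξ * (1 - zinf) = 0) ∧
    yinf ∈ Set.Ioo (0:ℝ) 1 ∧ zinf ∈ Set.Ioc (0:ℝ) 1 ∧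
    (∀ y z : ℝ, 0 < y →
      -y + τ * y * (1 - y) * z = 0 → -(ζ * z * y) + ξ * (1 - z) = 0 →
      y = yinf ∧ z = zinf) := by
  have hω0 : 0 < ω := by rw [hω]; exact div_pos hζ hξ
  have hζω : ζ = ω * ξ := by rw [hω]; field_simp
  have h1 : 0 < τ + ω := by linarith
  have h2 : 0 < 1 + ω := by linarith
  have h3 : 0 < τ := by linarith
  have h1' : (τ + ω) ≠ 0 := ne_of_gt h1
  have h4 : τ * (1 + ω) ≠ 0 := by positivity
  intro yinf zinf
  have hyv : yinf = (τ - 1) / (τ + ω) := rfl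
  have hzv : zinf = (τ + ω) / (τ * (1 + ω)) := rfl
  refine ⟨?_, ?_, ⟨?_, ?_⟩, ⟨?_, ?_⟩, ?_⟩
  · rw [hyv, hzv]; field_simp; ring
  · rw [hyv, hzv, hζω]; field_simp; ring
  · rw [hyv]; exact div_pos (by linarith) h1
  · rw [hyv, div_lt_one h1]; linarith
  · rw [hzv]; positivity
  · rw [hzv, div_le_one (by positivity)]; nlinarith
  · intro y z hy e1 e2
    have hy0 : y ≠ 0 := ne_of_gt hy
    have E1 : τ * (1 - y) * z = 1 := by
      have h : y * (τ * (1 - y) * z) = y * 1 := by linear_combination e1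
      exact mul_left_cancel₀ hy0 h
    have E2 : z * (ξ + ζ * y) = ξ := by linear_combination -e2
    have E3 : ξ + ζ * y = ξ * τ * (1 - y) := by
      linear_combination τ * (1 - y) * E2 - (ξ + ζ * y) * E1
    have hyval : y = yinf := by
      rw [hyv, eq_div_iff h1']
      have : ξ * (1 + ω * y) = ξ * (τ * (1 - y)) := by
        rw [hζω] at E3; linear_combination E3
      have h5 := mul_left_cancel₀ (ne_of_gt hξ) this
      linarith [h5]
    have hzval : z = zinf := by
      rw [hyval, hyv] at E1
      rw [hzv, eq_div_iff h4]
      field_simp at E1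
      linarith [E1]
    exact ⟨hyval, hzval⟩
end

section
/- Let τ > 1, ζ > 0 and ω > 0. The 2×2 real matrix J with entries J₁₁ = −(τ−1)/(1+ω), J₁₂ = τ(τ−1)(ω+1)/(τ+ω)², J₂₁ = −ζ(τ+ω)/(τ(1+ω)), J₂₂ = −ζ τ(ω+1)/(ω(τ+ω)) — the Jacobian of the system dy/dt = −y + τ y(1−y)z, dz/dt = −ζ z y + ξ(1−z) evaluated at the endemic equilibrium ((τ−1)/(τ+ω), (τ+ω)/(τ(1+ω))) — satisfies tr(J) < 0 and det(J) > 0; hence both of its eigenvalues have negative real part, so the endemic equilibrium is locally asymptotically stable. -/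
lemma quad_root_neg (t d : ℝ) (ht : t < 0) (hd : 0 < d) (μ : ℂ)
    (h : μ ^ 2 - (t : ℂ) * μ + (d : ℂ) = 0) : μ.re < 0 := by
  set a := μ.re
  set b := μ.im
  have hre : a ^ 2 - b ^ 2 - t * a + d = 0 := by
    have := congrArg Complex.re h
    simpa [a, b, pow_two, Complex.mul_re, Complex.mul_im, sq] using this
  have him : b * (2 * a - t) = 0 := by
    have := congrArg Complex.im h
    simp [a, b, pow_two, Complex.mul_re, Complex.mul_im, sq] at this
    linarith
  rcases mul_eq_zero.mp him with hb | ha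
  · nlinarith [sq_nonneg a]
  · linarith

/-- The Jacobian of Example 2 at the endemic equilibrium has negative trace and
    positive determinant; hence every (complex) eigenvalue, i.e. every root of
    its characteristic polynomial, has negative real part. -/
theorem stmt_9 (τ ζ ω : ℝ) (hτ : 1 < τ) (hζ : 0 < ζ) (hω : 0 < ω) :
    let J : Matrix (Fin 2) (Fin 2) ℝ :=
      !![-(τ - 1) / (1 + ω), τ * (τ - 1) * (ω + 1) / (τ + ω) ^ 2;
         -(ζ * (τ + ω) / (τ * (1 + ω))), -(ζ * τ * (ω + 1) / (ω * (τ + ω)))]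
    Matrix.trace J < 0 ∧ 0 < J.det ∧
      ∀ μ : ℂ, (J.map (fun x : ℝ => (x : ℂ))).charpoly.IsRoot μ → μ.re < 0 := by
  intro J
  have h1 : (0:ℝ) < τ - 1 := by linarith
  have h2 : (0:ℝ) < τ + ω := by linarith
  have h3 : (0:ℝ) < 1 + ω := by linarith
  have htr : Matrix.trace J < 0 := by
    have ht : Matrix.trace J = -(τ - 1) / (1 + ω) + -(ζ * τ * (ω + 1) / (ω * (τ + ω))) := by
      simp [J, Matrix.trace_fin_two]
    rw [ht]
    have t1 : -(τ - 1) / (1 + ω) < 0 := div_neg_of_neg_of_pos (by linarith) h3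
    have t2 : 0 < ζ * τ * (ω + 1) / (ω * (τ + ω)) := by positivity
    linarith
  have hdet : 0 < J.det := by
    have hd : J.det = (τ - 1) / (1 + ω) * (ζ * τ * (ω + 1) / (ω * (τ + ω)))
        + τ * (τ - 1) * (ω + 1) / (τ + ω) ^ 2 * (ζ * (τ + ω) / (τ * (1 + ω))) := by
      simp [J, Matrix.det_fin_two_of]
      ring
    rw [hd]
    positivity
  refine ⟨htr, hdet, ?_⟩
  intro μ hμ
  set K := J.map (fun x : ℝ => (x : ℂ)) with hKdef
  have hK : K.charpoly = (Polynomial.X - Polynomial.C (K 0 0)) *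
      (Polynomial.X - Polynomial.C (K 1 1)) - (-Polynomial.C (K 0 1)) * (-Polynomial.C (K 1 0)) := by
    rw [Matrix.charpoly, Matrix.det_fin_two,
      Matrix.charmatrix_apply_eq, Matrix.charmatrix_apply_eq,
      Matrix.charmatrix_apply_ne _ _ _ (by decide),
      Matrix.charmatrix_apply_ne _ _ _ (by decide)]
  have heval : (μ - (K 0 0)) * (μ - (K 1 1)) - (K 0 1) * (K 1 0) = 0 := by
    have := hμ
    rw [Polynomial.IsRoot, hK] at this
    simpa using this
  have hKij : ∀ i j, K i j = ((J i j : ℝ) : ℂ) := fun i j => rfl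
  apply quad_root_neg (Matrix.trace J) (J.det) htr hdet μ
  rw [Matrix.trace_fin_two, Matrix.det_fin_two]
  push_cast
  rw [hKij 0 0, hKij 0 1, hKij 1 0, hKij 1 1] at heval
  linear_combination heval
end

section
/- Let τ > 1 and ω > 0, and define y∞ = 1 − (1−2ω)/(2τ) − √(((1−2ω)/(2τ))² + 2ω/τ). Then y∞ satisfies the endemic-equilibrium equation of the ASIS model, 2ω y∞ (1 − y∞) = (τ(1 − y∞) − 1)(1 − y∞)², and moreover 0 < y∞ ≤ 1 − 1/τ, so that z∞ = 1/(τ(1 − y∞)) ∈ (0,1] and the endemic equilibrium (y∞, z∞) lies in the physically relevant region. -/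
/-- ASIS model (f_br(y) = 2y(1−y), f_cr(y) = (1−y)²): for τ > 1 the value
    yinf = 1 − (1−2ω)/(2τ) − √(((1−2ω)/(2τ))² + 2ω/τ) satisfies the
    endemic-equilibrium equation 2ω y(1−y) = (τ(1−y) − 1)(1−y)², and
    0 < yinf ≤ 1 − 1/τ, so zinf = 1/(τ(1−yinf)) ∈ (0,1]. -/
theorem stmt_10 (τ ω : ℝ) (hτ : 1 < τ) (hω : 0 < ω) :
    let yinf : ℝ := 1 - (1 - 2 * ω) / (2 * τ) -
      Real.sqrt (((1 - 2 * ω) / (2 * τ)) ^ 2 + 2 * ω / τ)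
    (2 * ω * yinf * (1 - yinf) = (τ * (1 - yinf) - 1) * (1 - yinf) ^ 2) ∧
    0 < yinf ∧ yinf ≤ 1 - 1 / τ ∧ 1 / (τ * (1 - yinf)) ∈ Set.Ioc (0:ℝ) 1 := by
  intro yinf
  have hτ0 : (0:ℝ) < τ := by linarith
  have hτinv : 1 / τ < 1 := by rw [div_lt_one hτ0]; linarith
  have hτinv0 : 0 < 1 / τ := by positivity
  set a : ℝ := (1 - 2 * ω) / (2 * τ) with ha
  set s : ℝ := Real.sqrt (a ^ 2 + 2 * ω / τ) with hs
  have hD : (0:ℝ) < a ^ 2 + 2 * ω / τ := by positivity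
  have hs0 : 0 < s := Real.sqrt_pos.mpr hD
  have hsq : s ^ 2 = a ^ 2 + 2 * ω / τ := Real.sq_sqrt hD.le
  have haτ : 2 * τ * a = 1 - 2 * ω := by
    rw [ha]; field_simp
  have hyinf : yinf = 1 - a - s := rfl
  have e1 : (1 - a) ^ 2 - (a ^ 2 + 2 * ω / τ) = 1 - 1 / τ := by
    rw [ha]; field_simp; ring
  have e2 : s ^ 2 - (1 / τ - a) ^ 2 = 2 * ω * (τ - 1) / τ ^ 2 := by
    rw [hsq, ha]; field_simp; ring
  clear_value yinf
  clear_value s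
  clear_value a
  clear ha hs
  -- positivity: s < 1 - a
  have h1 : 0 < 1 - a := by nlinarith [e1, hτinv, hD]
  have h2 : s ^ 2 < (1 - a) ^ 2 := by rw [hsq]; linarith [e1, hτinv]
  have h1a : s < 1 - a := by nlinarith [h2, h1, hs0]
  have hypos : 0 < yinf := by rw [hyinf]; linarith
  -- yinf ≤ 1 - 1/τ, i.e. 1/τ ≤ a + s
  have hrhs : 0 ≤ 2 * ω * (τ - 1) / τ ^ 2 := by
    have : 0 ≤ τ - 1 := by linarith
    positivity
  have key : 1 / τ ≤ a + s := by
    rcases le_or_gt (1 / τ - a) 0 with h | h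
    · linarith
    · have h3 : (1 / τ - a) ^ 2 ≤ s ^ 2 := by linarith [e2, hrhs]
      nlinarith [h3, hs0, h]
  have hyle : yinf ≤ 1 - 1 / τ := by rw [hyinf]; linarith
  have h1y : 0 < 1 - yinf := by linarith
  have hz0 : 0 < τ * (1 - yinf) := mul_pos hτ0 h1y
  refine ⟨?_, hypos, hyle, ?_, ?_⟩
  · -- the equilibrium equation
    rw [hyinf]
    have htinv : τ * τ⁻¹ = 1 := mul_inv_cancel₀ hτ0.ne'
    linear_combination (-(a + s) * τ) * hsq + (-(a + s) ^ 2) * haτ -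
      (2 * ω * (a + s)) * htinv
  · exact one_div_pos.mpr hz0
  · rw [div_le_one hz0]
    have ht : τ * (1 / τ) = 1 := by field_simp
    calc (1:ℝ) = τ * (1 / τ) := ht.symm
    _ ≤ τ * (1 - yinf) := by
        apply mul_le_mul_of_nonneg_left _ hτ0.le
        linarith
end

section
/- Let τ > 0 and ω > 0 satisfy 2τ > ω + 2 + √(8ω) (i.e. R₀ = 2τ/(ω + 2 + √(8ω)) > 1). Then the discriminant D = (2τ + ω − 2)² − 8τω is strictly positive, and both roots y± = (2τ + ω − 2 ± √D)/(4τ) of the quadratic 2τ y² − (2τ + ω − 2) y + ω = 0 lie in the open interval (0,1); each of them satisfies the endemic-equilibrium equation of the AID model, ω (1 − y)² = (τ(1 − y) − 1) · 2y(1 − y). Thus the AID model admits exactly two endemic equilibria when R₀ > 1. -/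
/-- AID model (f_br(y) = (1−y)², f_cr(y) = 2y(1−y)): if R₀ = 2τ/(ω+2+√(8ω)) > 1
    then D = (2τ+ω−2)² − 8τω > 0, and the two roots y± = (2τ+ω−2 ± √D)/(4τ) of
    2τy² − (2τ+ω−2)y + ω = 0 are distinct, lie in (0,1), satisfy the
    endemic-equilibrium equation ω(1−y)² = (τ(1−y)−1)·2y(1−y), and are the only
    solutions of that equation in (0,1): exactly two endemic equilibria. -/
theorem stmt_11 (τ ω : ℝ) (hτ : 0 < τ) (hω : 0 < ω)
    (hR : ω + 2 + Real.sqrt (8 * ω) < 2 * τ) :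
    let D : ℝ := (2 * τ + ω - 2) ^ 2 - 8 * τ * ω
    let yp : ℝ := (2 * τ + ω - 2 + Real.sqrt D) / (4 * τ)
    let ym : ℝ := (2 * τ + ω - 2 - Real.sqrt D) / (4 * τ)
    0 < D ∧ ym ≠ yp ∧
    yp ∈ Set.Ioo (0:ℝ) 1 ∧ ym ∈ Set.Ioo (0:ℝ) 1 ∧
    (2 * τ * yp ^ 2 - (2 * τ + ω - 2) * yp + ω = 0) ∧
    (2 * τ * ym ^ 2 - (2 * τ + ω - 2) * ym + ω = 0) ∧
    (ω * (1 - yp) ^ 2 = (τ * (1 - yp) - 1) * (2 * yp * (1 - yp))) ∧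
    (ω * (1 - ym) ^ 2 = (τ * (1 - ym) - 1) * (2 * ym * (1 - ym))) ∧
    (∀ y ∈ Set.Ioo (0:ℝ) 1,
      ω * (1 - y) ^ 2 = (τ * (1 - y) - 1) * (2 * y * (1 - y)) → y = ym ∨ y = yp) := by
  intro D yp ym
  set t := Real.sqrt (8 * ω) with ht
  have ht0 : 0 ≤ t := Real.sqrt_nonneg _
  have ht2 : t ^ 2 = 8 * ω := Real.sq_sqrt (by linarith)
  -- key: 2τ+ω−2 − 2ω > t ≥ 0
  have hb : 2 * ω + t < 2 * τ + ω - 2 := by linarith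
  have hD : 0 < D := by
    have : D = (2 * τ + ω - 2 - 2 * ω - t) * (2 * τ + ω - 2 - 2 * ω + t) := by
      simp only [D]; ring_nf; nlinarith [ht2]
    rw [this]
    have h1 : 0 < 2 * τ + ω - 2 - 2 * ω - t := by linarith
    nlinarith
  set s := Real.sqrt D with hs
  have hs0 : 0 < s := Real.sqrt_pos.mpr hD
  have hs2 : s ^ 2 = (2 * τ + ω - 2) ^ 2 - 8 * τ * ω := Real.sq_sqrt hD.le
  have h4τ : (0:ℝ) < 4 * τ := by linarith
  have h4τ' : (4 * τ : ℝ) ≠ 0 := ne_of_gt h4τ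
  -- s < b − 2ω  (for ym > 0)
  have hslt : s < 2 * τ + ω - 2 - 2 * ω := by
    nlinarith [hs2, ht2, hs0]
  -- s < 2τ − ω + 2 (for yp < 1), since (2τ−ω+2)² − s² = 16τ
  have hA : 0 < 2 * τ - ω + 2 := by nlinarith [ht0]
  have hslt2 : s < 2 * τ - ω + 2 := by nlinarith [hs2, hs0]
  have hypq : 2 * τ * yp ^ 2 - (2 * τ + ω - 2) * yp + ω = 0 := by
    simp only [yp]; field_simp; nlinarith [hs2]
  have hymq : 2 * τ * ym ^ 2 - (2 * τ + ω - 2) * ym + ω = 0 := by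
    simp only [ym]; field_simp; nlinarith [hs2]
  refine ⟨hD, ?_, ?_, ?_, hypq, hymq, ?_, ?_, ?_⟩
  · -- ym ≠ yp
    intro h
    simp only [ym, yp, div_eq_div_iff h4τ' h4τ'] at h
    nlinarith [hs0]
  · constructor
    · apply div_pos _ h4τ; linarith
    · rw [div_lt_one h4τ]; linarith
  · constructor
    · apply div_pos _ h4τ; linarith
    · rw [div_lt_one h4τ]; linarith
  · linear_combination (1 - yp) * hypq
  · linear_combination (1 - ym) * hymq
  · intro y hy heq
    have hy1 : (1 : ℝ) - y ≠ 0 := by have := hy.2; intro h; linarith [hy.2]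
    have hQ : 2 * τ * y ^ 2 - (2 * τ + ω - 2) * y + ω = 0 := by
      have h1 : (1 - y) * (2 * τ * y ^ 2 - (2 * τ + ω - 2) * y + ω) = 0 := by
        linear_combination heq
      rcases mul_eq_zero.mp h1 with h | h
      · exact absurd h hy1
      · exact h
    have key : ((4 * τ * y - (2 * τ + ω - 2)) - s) * ((4 * τ * y - (2 * τ + ω - 2)) + s) = 0 := by
      linear_combination 8 * τ * hQ - hs2
    rcases mul_eq_zero.mp key with h | h
    · right; simp only [yp]; field_simp; linarith
    · left; simp only [ym]; field_simp; linarith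
end

section
/- Let τ > 1 and let z_in ∈ [0, 1/τ). Then there exists a unique z_out ∈ (1/τ, 1) such that ∫_{z_in}^{z_out} (τ z − 1)/(1 − z) dz = 0. In particular, the exit point z_out given by the entry–exit function is strictly smaller than 1 for every z_in ∈ [0, 1/τ). -/
/-!
Since `(τz − 1)/(1 − z) = −τ + (τ − 1)/(1 − z)`, the integral from `z_in` to `z` is
`F z − F z_in` for `F z = −τz − (τ − 1) log (1 − z)`. On `z < 1` the potential `F` strictly
decreases up to `1/τ` and then strictly increases to `+∞` as `z → 1⁻`, so the level
`F z_in > F (1/τ)` is attained exactly once in `(1/τ, 1)`.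
-/

open Real Set Filter Topology

theorem existsUnique_mem_Ioo_eq_of_strictMonoOn_of_tendsto_atTop {f : ℝ → ℝ} {a b v : ℝ}
    (hab : a < b) (hcont : ContinuousOn f (Ico a b)) (hmono : StrictMonoOn f (Ico a b))
    (hlim : Tendsto f (𝓝[<] b) atTop) (hv : f a < v) :
    ∃! z, z ∈ Ioo a b ∧ f z = v := by
  obtain ⟨x, hvx, hx⟩ := ((hlim.eventually_gt_atTop v).and (Ioo_mem_nhdsLT hab)).exists
  obtain ⟨z, hz, rfl⟩ := intermediate_value_Ioo hx.1.le
    (hcont.mono (Icc_subset_Ico_right hx.2)) ⟨hv, hvx⟩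
  refine ⟨z, ⟨⟨hz.1, hz.2.trans hx.2⟩, rfl⟩, fun y ⟨hy, hyz⟩ => ?_⟩
  exact hmono.injOn (Ioo_subset_Ico_self hy) ⟨hz.1.le, hz.2.trans hx.2⟩ hyz

noncomputable def entryExitPotential (τ x : ℝ) : ℝ := -τ * x - (τ - 1) * log (1 - x)

section entryExitPotential

variable {τ : ℝ}

theorem hasDerivAt_entryExitPotential {x : ℝ} (hx : x ≠ 1) :
    HasDerivAt (entryExitPotential τ) ((τ * x - 1) / (1 - x)) x := by
  have h1x : 1 - x ≠ 0 := sub_ne_zero.2 hx.symm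
  have hlog : HasDerivAt (fun y => log (1 - y)) ((1 - x)⁻¹ * -1) x :=
    (hasDerivAt_log h1x).comp x ((hasDerivAt_id x).const_sub 1)
  refine (((hasDerivAt_id x).const_mul (-τ)).sub (hlog.const_mul (τ - 1))).congr_deriv ?_
  field_simp
  ring

theorem continuousOn_entryExitPotential : ContinuousOn (entryExitPotential τ) (Iio 1) :=
  fun _ hx => (hasDerivAt_entryExitPotential (ne_of_lt hx)).continuousAt.continuousWithinAt

theorem integral_eq_entryExitPotential_sub {a b : ℝ} (ha : a < 1) (hb : b < 1) :
    ∫ z in a..b, (τ * z - 1) / (1 - z) =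
      entryExitPotential τ b - entryExitPotential τ a := by
  have hne : ∀ x ∈ uIcc a b, x ≠ 1 := fun x hx => ne_of_lt (hx.2.trans_lt (max_lt ha hb))
  refine intervalIntegral.integral_eq_sub_of_hasDerivAt
    (fun x hx => hasDerivAt_entryExitPotential (hne x hx)) (ContinuousOn.intervalIntegrable ?_)
  exact ContinuousOn.div (by fun_prop) (by fun_prop) fun x hx => sub_ne_zero.2 (hne x hx).symm

theorem strictMonoOn_entryExitPotential (hτ : 0 < τ) :
    StrictMonoOn (entryExitPotential τ) (Ico (1 / τ) 1) := by
  refine strictMonoOn_of_hasDerivWithinAt_pos (convex_Ico _ _)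
    (continuousOn_entryExitPotential.mono Ico_subset_Iio_self)
    (fun x hx => (hasDerivAt_entryExitPotential
      (ne_of_lt (Ico_subset_Iio_self (interior_subset hx)))).hasDerivWithinAt)
    fun x hx => ?_
  rw [interior_Ico] at hx
  have hτx : 1 < τ * x := (div_lt_iff₀' hτ).1 hx.1
  exact div_pos (by linarith) (by linarith [hx.2])

variable (hτ : 1 < τ)
include hτ

theorem strictAntiOn_entryExitPotential : StrictAntiOn (entryExitPotential τ) (Iic (1 / τ)) := by
  have hsub : Iic (1 / τ) ⊆ Iio 1 := Iic_subset_Iio.2 ((div_lt_one (by linarith)).2 hτ)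
  refine strictAntiOn_of_hasDerivWithinAt_neg (convex_Iic _)
    (continuousOn_entryExitPotential.mono hsub)
    (fun x hx => (hasDerivAt_entryExitPotential
      (ne_of_lt (hsub (interior_subset hx)))).hasDerivWithinAt)
    fun x hx => ?_
  rw [interior_Iic] at hx
  have hτx : τ * x < 1 := (lt_div_iff₀' (by linarith)).1 hx
  have hx1 : x < 1 := hsub (Iio_subset_Iic_self hx)
  exact div_neg_of_neg_of_pos (by linarith) (by linarith)

theorem tendsto_entryExitPotential_nhdsLT_one :
    Tendsto (entryExitPotential τ) (𝓝[<] 1) atTop := by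
  have hsub : Tendsto (fun x : ℝ => 1 - x) (𝓝[<] 1) (𝓝[>] 0) :=
    tendsto_nhdsWithin_of_tendsto_nhds_of_eventually_within _
      (by simpa using ((continuous_sub_left (1 : ℝ)).tendsto 1).mono_left nhdsWithin_le_nhds)
      (eventually_nhdsWithin_of_forall fun _ hx => mem_Ioi.2 (sub_pos.2 hx))
  have hlog := (tendsto_log_nhdsGT_zero.comp hsub).const_mul_atBot_of_neg
    (show -(τ - 1) < 0 by linarith)
  have hlin : Tendsto (fun x => -τ * x) (𝓝[<] 1) (𝓝 (-τ * 1)) :=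
    ((continuous_const.mul continuous_id).tendsto 1).mono_left nhdsWithin_le_nhds
  refine (hlin.add_atTop hlog).congr fun x => ?_
  simp only [entryExitPotential, Function.comp_apply]
  ring

end entryExitPotential

/-- Entry–exit function: for τ > 1 and z_in ∈ [0, 1/τ) there is a unique
    z_out ∈ (1/τ, 1) with ∫_{z_in}^{z_out} (τz − 1)/(1 − z) dz = 0; in
    particular the exit point is strictly smaller than 1. -/
theorem stmt_15 (τ : ℝ) (hτ : 1 < τ) (zin : ℝ) (hzin : zin ∈ Set.Ico 0 (1 / τ)) :
    ∃! zout : ℝ, zout ∈ Set.Ioo (1 / τ) 1 ∧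
      (∫ z in zin..zout, (τ * z - 1) / (1 - z)) = 0 := by
  have hτ1 : 1 / τ < 1 := (div_lt_one (by linarith)).2 hτ
  have hzin1 : zin < 1 := hzin.2.trans hτ1
  have hlevel : ∀ z, z ∈ Ioo (1 / τ) 1 ∧ (∫ z in zin..z, (τ * z - 1) / (1 - z)) = 0 ↔
      z ∈ Ioo (1 / τ) 1 ∧ entryExitPotential τ z = entryExitPotential τ zin :=
    fun z => and_congr_right fun hz => by
      rw [integral_eq_entryExitPotential_sub hzin1 hz.2, sub_eq_zero]
  rw [existsUnique_congr hlevel]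
  exact existsUnique_mem_Ioo_eq_of_strictMonoOn_of_tendsto_atTop hτ1
    (continuousOn_entryExitPotential.mono Ico_subset_Iio_self)
    (strictMonoOn_entryExitPotential (by linarith)) (tendsto_entryExitPotential_nhdsLT_one hτ)
    (strictAntiOn_entryExitPotential hτ hzin.2.le self_mem_Iic hzin.2)
end

section
/- Let f_br, f_cr : [0,1] → ℝ be continuously differentiable and nonnegative with f_br(0) > 0 and f_cr(0) > 0, let τ, ζ, ξ > 0 and ω = ζ/ξ, and set z₀ = f_cr(0)/(ω f_br(0) + f_cr(0)). Then (0, z₀) is an equilibrium of the aNIMFA system, and the Jacobian matrix of the system at (0, z₀) is lower triangular with real eigenvalues λ₁ = −1 + τ f_cr(0)/(ω f_br(0) + f_cr(0)) and λ₂ = −ζ f_br(0) − ξ f_cr(0). Moreover λ₂ < 0 always, and both eigenvalues are negative if and only if τ < (ω f_br(0) + f_cr(0))/f_cr(0), i.e. if and only if the basic reproduction number R₀ = τ f_cr(0)/(ω f_br(0) + f_cr(0)) is less than 1. -/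
open Module.End in
lemma eigTri_aux (M : Matrix (Fin 2) (Fin 2) ℝ) (h : M 0 1 = 0) :
    HasEigenvalue (Matrix.toLin' M) (M 0 0) ∧ HasEigenvalue (Matrix.toLin' M) (M 1 1) := by
  have hd : HasEigenvalue (Matrix.toLin' M) (M 1 1) := by
    apply hasEigenvalue_of_hasEigenvector (x := ![0, 1])
    constructor
    · rw [mem_eigenspace_iff, Matrix.toLin'_apply]
      funext i
      fin_cases i <;>
        simp [Matrix.mulVec, dotProduct, Fin.sum_univ_two, h]
    · intro h0
      have := congrFun h0 1
      simp at this
  refine ⟨?_, hd⟩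
  by_cases had : M 0 0 = M 1 1
  · rw [had]; exact hd
  · apply hasEigenvalue_of_hasEigenvector (x := ![M 0 0 - M 1 1, M 1 0])
    constructor
    · rw [mem_eigenspace_iff, Matrix.toLin'_apply]
      funext i
      fin_cases i <;>
        simp [Matrix.mulVec, dotProduct, Fin.sum_univ_two, h] <;> ring
    · intro h0
      have := congrFun h0 0
      simp [sub_eq_zero] at this
      exact had this

/-- DFE of the aNIMFA system with f_br(0), f_cr(0) > 0: (0, z₀) with
    z₀ = f_cr(0)/(ω f_br(0) + f_cr(0)) is an equilibrium; the Jacobian there is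
    lower triangular with real eigenvalues λ₁ = −1 + τ f_cr(0)/(ω f_br(0)+f_cr(0))
    and λ₂ = −ζ f_br(0) − ξ f_cr(0); λ₂ < 0 always, and both eigenvalues are
    negative iff τ < (ω f_br(0)+f_cr(0))/f_cr(0), i.e. iff R₀ < 1. -/
theorem stmt_16 (fbr fcr : ℝ → ℝ)
    (hbrC : ContDiffOn ℝ 1 fbr (Set.Icc 0 1)) (hcrC : ContDiffOn ℝ 1 fcr (Set.Icc 0 1))
    (hbr : ∀ y ∈ Set.Icc (0:ℝ) 1, 0 ≤ fbr y) (hcr : ∀ y ∈ Set.Icc (0:ℝ) 1, 0 ≤ fcr y)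
    (hbr0 : 0 < fbr 0) (hcr0 : 0 < fcr 0)
    (τ ζ ξ : ℝ) (hτ : 0 < τ) (hζ : 0 < ζ) (hξ : 0 < ξ) (ω : ℝ) (hω : ω = ζ / ξ) :
    let z₀ : ℝ := fcr 0 / (ω * fbr 0 + fcr 0)
    let J : Matrix (Fin 2) (Fin 2) ℝ :=
      !![deriv (fun y => -y + τ * y * (1 - y) * z₀) 0,
         deriv (fun zz => -(0:ℝ) + τ * 0 * (1 - 0) * zz) z₀;
         derivWithin (fun y => -(ζ * z₀ * fbr y) + ξ * (1 - z₀) * fcr y) (Set.Icc 0 1) 0,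
         deriv (fun zz => -(ζ * zz * fbr 0) + ξ * (1 - zz) * fcr 0) z₀]
    (-(0:ℝ) + τ * 0 * (1 - 0) * z₀ = 0) ∧
    (-(ζ * z₀ * fbr 0) + ξ * (1 - z₀) * fcr 0 = 0) ∧
    J 0 1 = 0 ∧
    J 0 0 = -1 + τ * fcr 0 / (ω * fbr 0 + fcr 0) ∧
    J 1 1 = -(ζ * fbr 0) - ξ * fcr 0 ∧
    Module.End.HasEigenvalue (Matrix.toLin' J) (-1 + τ * fcr 0 / (ω * fbr 0 + fcr 0)) ∧
    Module.End.HasEigenvalue (Matrix.toLin' J) (-(ζ * fbr 0) - ξ * fcr 0) ∧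
    (-(ζ * fbr 0) - ξ * fcr 0 < 0) ∧
    ((J 0 0 < 0 ∧ J 1 1 < 0) ↔ τ < (ω * fbr 0 + fcr 0) / fcr 0) ∧
    (τ < (ω * fbr 0 + fcr 0) / fcr 0 ↔ τ * fcr 0 / (ω * fbr 0 + fcr 0) < 1) := by
  intro z₀ J
  have hz : z₀ = fcr 0 / (ω * fbr 0 + fcr 0) := rfl
  have hJ : J = !![deriv (fun y => -y + τ * y * (1 - y) * z₀) 0,
         deriv (fun zz => -(0:ℝ) + τ * 0 * (1 - 0) * zz) z₀;
         derivWithin (fun y => -(ζ * z₀ * fbr y) + ξ * (1 - z₀) * fcr y) (Set.Icc 0 1) 0,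
         deriv (fun zz => -(ζ * zz * fbr 0) + ξ * (1 - zz) * fcr 0) z₀] := rfl
  have hω0 : 0 < ω := hω ▸ div_pos hζ hξ
  have hD : 0 < ω * fbr 0 + fcr 0 := by positivity
  -- equilibrium conditions
  have eq1 : -(0:ℝ) + τ * 0 * (1 - 0) * z₀ = 0 := by ring
  have eq2 : -(ζ * z₀ * fbr 0) + ξ * (1 - z₀) * fcr 0 = 0 := by
    have hDne : ω * fbr 0 + fcr 0 ≠ 0 := ne_of_gt hD
    rw [hz, hω] at *
    field_simp
    ring
  -- derivative computations
  have h00 : deriv (fun y : ℝ => -y + τ * y * (1 - y) * z₀) 0 = -1 + τ * z₀ := by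
    have h : HasDerivAt (fun y : ℝ => -y + τ * y * (1 - y) * z₀)
        (-1 + (τ * 1 * (1 - 0) + τ * 0 * (0 - 1)) * z₀) 0 := by
      exact (hasDerivAt_id (0:ℝ)).neg.add
        ((((hasDerivAt_id (0:ℝ)).const_mul τ).mul
          ((hasDerivAt_const (0:ℝ) (1:ℝ)).sub (hasDerivAt_id 0))).mul_const z₀)
    rw [h.deriv]; ring
  have h01 : deriv (fun zz : ℝ => -(0:ℝ) + τ * 0 * (1 - 0) * zz) z₀ = 0 := by
    have : (fun zz : ℝ => -(0:ℝ) + τ * 0 * (1 - 0) * zz) = fun _ => (0:ℝ) := by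
      funext zz; ring
    rw [this, deriv_const]
  have h11 : deriv (fun zz : ℝ => -(ζ * zz * fbr 0) + ξ * (1 - zz) * fcr 0) z₀
      = -(ζ * fbr 0) - ξ * fcr 0 := by
    have h : HasDerivAt (fun zz : ℝ => -(ζ * zz * fbr 0) + ξ * (1 - zz) * fcr 0)
        (-(ζ * 1 * fbr 0) + ξ * (0 - 1) * fcr 0) z₀ := by
      exact (((hasDerivAt_id z₀).const_mul ζ).mul_const (fbr 0)).neg.add
        ((((hasDerivAt_const z₀ (1:ℝ)).sub (hasDerivAt_id z₀)).const_mul ξ).mul_const (fcr 0))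
    rw [h.deriv]; ring
  have hJ01 : J 0 1 = 0 := by rw [hJ]; simpa using h01
  have hJ00 : J 0 0 = -1 + τ * fcr 0 / (ω * fbr 0 + fcr 0) := by
    rw [hJ]
    simp only [Matrix.cons_val', Matrix.cons_val_zero, Matrix.empty_val',
      Matrix.cons_val_fin_one, Matrix.of_apply]
    rw [h00, hz, mul_div_assoc]
  have hJ11 : J 1 1 = -(ζ * fbr 0) - ξ * fcr 0 := by
    rw [hJ]
    simp only [Matrix.cons_val', Matrix.cons_val_one, Matrix.head_cons, Matrix.empty_val',
      Matrix.cons_val_fin_one, Matrix.of_apply, Matrix.head_fin_const]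
    exact h11
  have heig := eigTri_aux J hJ01
  have hlam2 : -(ζ * fbr 0) - ξ * fcr 0 < 0 := by nlinarith
  have key : τ < (ω * fbr 0 + fcr 0) / fcr 0 ↔ τ * fcr 0 / (ω * fbr 0 + fcr 0) < 1 := by
    rw [lt_div_iff₀ hcr0, div_lt_one hD]
  refine ⟨eq1, eq2, hJ01, hJ00, hJ11, ?_, ?_, hlam2, ?_, key⟩
  · rw [← hJ00]; exact heig.1
  · rw [← hJ11]; exact heig.2
  · rw [hJ00, hJ11, key]
    constructor
    · rintro ⟨h, -⟩
      have : τ * fcr 0 / (ω * fbr 0 + fcr 0) < 1 := by linarith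
      exact this
    · intro h
      exact ⟨by linarith, hlam2⟩
end
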